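/- arXiv:1504.06466 — 6 statements merged into one kernel-verified Lean document; each statement's English description precedes it below -/
import Mathlib

section
/- Let x be a billiard solution of the one-dimensional impulsive Cauchy problem with initial velocity v satisfying |v| > ∫₀ᵀ m(s) ds, and let t₁ < t₂ < … < t_k be its impact times. Then x(t_i)·x(t_{i+1}) < 0 for every i = 1, …, k−1; that is, each two consecutive impact points lie on opposite endpoints of the interval [−a, a]. -/
open Set MeasureTheory Filter Topology

/-- The set of impact times of a trajectory `x` on the time interval `(0, T]`
in the one-dimensional billiard table `K = [-a, a]`. -/
def impactSet (T a : ℝ) (x : ℝ → ℝ) : Set ℝ :=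
  {t | t ∈ Set.Ioc 0 T ∧ |x t| = a}

/-- A billiard solution of the one-dimensional impulsive Cauchy problem
`x'' = f(t, x)` in `K = [-a, a]`, `x(0) = 0`, with initial velocity `v` and the
elastic reflection law `x'(s+) = -x'(s-)` at impact times `s < T`.

The function `xd` plays the role of the derivative of `x` away from the (finitely
many) impact times; on each connected component of `[0, T]` minus the impact set it
is absolutely continuous with `xd' = f(t, x(t))` a.e., which is expressed by the
integral identity `accel`.  One-sided limits of `xd` at impact times exist
(`leftLimExists`, and `reflect` then yields the right limits), and the reflection
law is `reflect`. -/
structure BilliardSol (T a : ℝ) (f : ℝ → ℝ → ℝ) (v : ℝ) where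
  x : ℝ → ℝ
  xd : ℝ → ℝ
  cont : ContinuousOn x (Set.Icc 0 T)
  init : x 0 = 0
  confined : ∀ t ∈ Set.Icc 0 T, |x t| ≤ a
  finImpacts : (impactSet T a x).Finite
  hasDeriv : ∀ t ∈ Set.Icc 0 T \ impactSet T a x,
      HasDerivWithinAt x (xd t) (Set.Icc 0 T) t
  initVel : xd 0 = v
  accel : ∀ s u : ℝ, s ∈ Set.Icc 0 T → u ∈ Set.Icc 0 T → s ≤ u →
      (∀ τ ∈ Set.Icc s u, τ ∉ impactSet T a x) →
      xd u = xd s + ∫ τ in s..u, f τ (x τ)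
  leftLimExists : ∀ s ∈ impactSet T a x,
      ∃ L : ℝ, Filter.Tendsto xd (nhdsWithin s (Set.Iio s \ impactSet T a x)) (nhds L)
  reflect : ∀ s ∈ impactSet T a x, s < T → ∀ L : ℝ,
      Filter.Tendsto xd (nhdsWithin s (Set.Iio s \ impactSet T a x)) (nhds L) →
      Filter.Tendsto xd (nhdsWithin s (Set.Ioi s \ impactSet T a x)) (nhds (-L))

/-! Between impacts `|x'|` changes by at most `∫ m`, and a reflection does not change `|x'|`,
so `|x'(t)| + ∫₀ᵗ m` never decreases; hence `|x'| ≥ |v| - ∫₀ᵀ m > 0` away from impacts.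
Between two consecutive impacts `x'` therefore never vanishes, so by Rolle's theorem `x` takes
different values at them; as both values lie in `{-a, a}`, they are opposite. -/

theorem nhdsWithin_sdiff_finite {X : Type*} [TopologicalSpace X] [T1Space X]
    {s S : Set X} {x : X} (hx : x ∉ s) (hS : S.Finite) : 𝓝[s \ S] x = 𝓝[s] x := by
  have hSc : Sᶜ ∈ 𝓝[s] x :=
    nhdsWithin_mono x (subset_compl_singleton_iff.2 hx)
      (nhdsNE_le_cofinite x hS.compl_mem_cofinite)
  rw [sdiff_eq, nhdsWithin_inter_of_mem' hSc]

theorem mul_neg_of_abs_eq_abs_of_ne {p q : ℝ} (habs : |p| = |q|) (hne : p ≠ q) : p * q < 0 := by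
  rcases abs_eq_abs.1 habs with h | rfl
  · exact absurd h hne
  · have hq : q ≠ 0 := by rintro rfl; simp at hne
    simpa using mul_self_pos.2 hq

theorem IntervalIntegrable.mono_Icc {m : ℝ → ℝ} {T r t : ℝ} (hm : IntervalIntegrable m volume 0 T)
    (hr : 0 ≤ r) (hrt : r ≤ t) (ht : t ≤ T) : IntervalIntegrable m volume r t :=
  hm.mono_set <|
    uIcc_subset_uIcc (Icc_subset_uIcc ⟨hr, hrt.trans ht⟩) (Icc_subset_uIcc ⟨hr.trans hrt, ht⟩)

theorem integral_add_integral_of_le {m : ℝ → ℝ} {T r t : ℝ} (hm : IntervalIntegrable m volume 0 T)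
    (hr : 0 ≤ r) (hrt : r ≤ t) (ht : t ≤ T) :
    (∫ τ in 0..r, m τ) + ∫ τ in r..t, m τ = ∫ τ in 0..t, m τ :=
  intervalIntegral.integral_add_adjacent_intervals (hm.mono_Icc le_rfl hr (hrt.trans ht))
    (hm.mono_Icc hr hrt ht)

theorem integral_le_integral_of_le {m : ℝ → ℝ} {T r t : ℝ} (hm : IntervalIntegrable m volume 0 T)
    (hm0 : ∀ τ ∈ Icc 0 T, 0 ≤ m τ) (hr : 0 ≤ r) (hrt : r ≤ t) (ht : t ≤ T) :
    ∫ τ in 0..r, m τ ≤ ∫ τ in 0..t, m τ := by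
  have hnonneg : 0 ≤ ∫ τ in r..t, m τ :=
    intervalIntegral.integral_nonneg hrt fun τ hτ => hm0 τ ⟨hr.trans hτ.1, hτ.2.trans ht⟩
  linarith [integral_add_integral_of_le hm hr hrt ht]

namespace BilliardSol

variable {T a : ℝ} {f : ℝ → ℝ → ℝ} {v : ℝ} (X : BilliardSol T a f v) {m : ℝ → ℝ}

noncomputable def speedBudget (m : ℝ → ℝ) (t : ℝ) : ℝ := |X.xd t| + ∫ τ in 0..t, m τ

theorem speedBudget_zero : X.speedBudget m 0 = |v| := by
  simp [speedBudget, X.initVel]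

theorem abs_xd_sub_le (hm : IntervalIntegrable m volume 0 T)
    (hfm : ∀ t ∈ Icc 0 T, ∀ y, |f t y| ≤ m t) {r t : ℝ} (hr : 0 ≤ r) (hrt : r ≤ t) (ht : t ≤ T)
    (hgap : ∀ τ ∈ Icc r t, τ ∉ impactSet T a X.x) :
    |X.xd t - X.xd r| ≤ ∫ τ in r..t, m τ := by
  rw [X.accel r t ⟨hr, hrt.trans ht⟩ ⟨hr.trans hrt, ht⟩ hrt hgap, add_sub_cancel_left]
  exact intervalIntegral.norm_integral_le_of_norm_le (f := fun τ => f τ (X.x τ)) hrt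
    (ae_of_all _ fun τ hτ => hfm τ ⟨hr.trans hτ.1.le, hτ.2.trans ht⟩ _) (hm.mono_Icc hr hrt ht)

theorem speedBudget_le_of_noImpact (hm : IntervalIntegrable m volume 0 T)
    (hfm : ∀ t ∈ Icc 0 T, ∀ y, |f t y| ≤ m t) {r t : ℝ} (hr : 0 ≤ r) (hrt : r ≤ t) (ht : t ≤ T)
    (hgap : ∀ τ ∈ Icc r t, τ ∉ impactSet T a X.x) :
    X.speedBudget m r ≤ X.speedBudget m t := by
  have hxd := X.abs_xd_sub_le hm hfm hr hrt ht hgap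
  have hsplit := integral_add_integral_of_le hm hr hrt ht
  unfold speedBudget
  linarith [abs_sub_abs_le_abs_sub (X.xd r) (X.xd t), abs_sub_comm (X.xd r) (X.xd t)]

theorem hasDerivAt_xd {t : ℝ} (ht : t ∈ Ioo 0 T) (htS : t ∉ impactSet T a X.x) :
    HasDerivAt X.x (X.xd t) t :=
  (X.hasDeriv t ⟨Ioo_subset_Icc_self ht, htS⟩).hasDerivAt (Icc_mem_nhds ht.1 ht.2)

theorem le_speedBudget_of_impact (hm : IntervalIntegrable m volume 0 T)
    (hfm : ∀ t ∈ Icc 0 T, ∀ y, |f t y| ≤ m t) {c s t : ℝ} (hs : s ∈ impactSet T a X.x)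
    (hst : s < t) (ht : t ≤ T) (hgap : ∀ τ ∈ Ioc s t, τ ∉ impactSet T a X.x)
    (hbefore : ∀ᶠ r in 𝓝[Iio s \ impactSet T a X.x] s, c ≤ X.speedBudget m r) :
    c ≤ X.speedBudget m t := by
  have hm0 : ∀ τ ∈ Icc 0 T, 0 ≤ m τ := fun τ hτ => (abs_nonneg _).trans (hfm τ hτ 0)
  have hs0 : 0 < s := hs.1.1
  obtain ⟨L, hL⟩ := X.leftLimExists s hs
  have hR := X.reflect s hs (hst.trans_le ht) L hL
  have : (𝓝[Iio s \ impactSet T a X.x] s).NeBot := by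
    rw [nhdsWithin_sdiff_finite self_notMem_Iio X.finImpacts]; infer_instance
  have : (𝓝[Ioi s \ impactSet T a X.x] s).NeBot := by
    rw [nhdsWithin_sdiff_finite self_notMem_Ioi X.finImpacts]; infer_instance
  have hleft : c ≤ |L| + ∫ τ in 0..s, m τ := by
    refine ge_of_tendsto (hL.abs.add_const _) ?_
    filter_upwards [hbefore, self_mem_nhdsWithin,
      eventually_nhdsWithin_of_eventually_nhds (eventually_gt_nhds hs0)] with r hc hr hr0
    have := integral_le_integral_of_le hm hm0 hr0.le hr.1.le (hst.le.trans ht)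
    unfold speedBudget at hc
    linarith
  have hright : |L| + ∫ τ in 0..s, m τ ≤ X.speedBudget m t := by
    refine le_of_tendsto (by simpa using hR.abs.add_const (∫ τ in 0..s, m τ)) ?_
    filter_upwards [self_mem_nhdsWithin,
      eventually_nhdsWithin_of_eventually_nhds (eventually_lt_nhds hst)] with r hr hrt
    have hr0 : 0 ≤ r := (hs0.trans hr.1).le
    have := integral_le_integral_of_le hm hm0 hs0.le hr.1.le (hrt.le.trans ht)
    have := X.speedBudget_le_of_noImpact hm hfm hr0 hrt.le ht
      fun τ hτ => hgap τ ⟨hr.1.trans_le hτ.1, hτ.2⟩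
    unfold speedBudget at this ⊢
    linarith
  exact hleft.trans hright

theorem abs_initVel_le_speedBudget (hm : IntervalIntegrable m volume 0 T)
    (hfm : ∀ t ∈ Icc 0 T, ∀ y, |f t y| ≤ m t) {t : ℝ} (ht : t ∈ Icc 0 T)
    (htS : t ∉ impactSet T a X.x) : |v| ≤ X.speedBudget m t := by
  set S := impactSet T a X.x
  induction hn : (S ∩ Icc 0 t).ncard using Nat.strong_induction_on generalizing t with
  | _ n ih =>
    rcases (S ∩ Icc 0 t).eq_empty_or_nonempty with hnone | hsome
    · rw [← X.speedBudget_zero (m := m)]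
      exact X.speedBudget_le_of_noImpact hm hfm le_rfl ht.1 ht.2
        fun τ hτ hτS => hnone.subset ⟨hτS, hτ⟩
    obtain ⟨s, ⟨hsS, hs⟩, hmax⟩ := Set.exists_max_image _ id (X.finImpacts.inter_of_left _) hsome
    have hst : s < t := hs.2.lt_of_ne fun h => htS (h ▸ hsS)
    refine X.le_speedBudget_of_impact hm hfm hsS hst ht.2
      (fun τ hτ hτS => (hmax τ ⟨hτS, hs.1.trans hτ.1.le, hτ.2⟩).not_gt hτ.1) ?_
    filter_upwards [self_mem_nhdsWithin,
      eventually_nhdsWithin_of_eventually_nhds (eventually_gt_nhds hsS.1.1)] with r ⟨hrs, hrS⟩ hr0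
    refine ih _ ?_ ⟨hr0.le, hrs.le.trans (hst.le.trans ht.2)⟩ hrS rfl
    rw [← hn]
    refine Set.ncard_lt_ncard ⟨fun τ hτ => ⟨hτ.1, hτ.2.1, hτ.2.2.trans (hrs.trans hst).le⟩, ?_⟩
      (X.finImpacts.inter_of_left _)
    exact fun hsub => (hsub ⟨hsS, hs⟩).2.2.not_gt hrs

theorem xd_ne_zero (hm : IntervalIntegrable m volume 0 T)
    (hfm : ∀ t ∈ Icc 0 T, ∀ y, |f t y| ≤ m t) (hv : ∫ τ in 0..T, m τ < |v|) {t : ℝ}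
    (ht : t ∈ Icc 0 T) (htS : t ∉ impactSet T a X.x) : X.xd t ≠ 0 := by
  intro h0
  have hbudget := X.abs_initVel_le_speedBudget hm hfm ht htS
  have := integral_le_integral_of_le hm (fun τ hτ => (abs_nonneg _).trans (hfm τ hτ 0))
    ht.1 ht.2 le_rfl
  rw [speedBudget, h0, abs_zero, zero_add] at hbudget
  linarith

end BilliardSol

theorem consecutive_impacts_opposite_general
    (T a : ℝ)
    (f : ℝ → ℝ → ℝ) (m : ℝ → ℝ)
    -- (H1): `f` is a Carathéodory function, integrably bounded by `m`
    (hm_int : IntervalIntegrable m volume 0 T)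
    (hf_bound : ∀ t ∈ Set.Icc 0 T, ∀ y : ℝ, |f t y| ≤ m t)
    (v : ℝ) (hv : (∫ s in (0:ℝ)..T, m s) < |v|)
    (X : BilliardSol T a f v) :
    ∀ s ∈ impactSet T a X.x, ∀ u ∈ impactSet T a X.x, s < u →
      (∀ τ ∈ Set.Ioo s u, τ ∉ impactSet T a X.x) →
      X.x s * X.x u < 0 := by
  intro s hs u hu hsu hgap
  have hIoo : Ioo s u ⊆ Ioo 0 T := Ioo_subset_Ioo hs.1.1.le hu.1.2
  have hx : X.x s ≠ X.x u := by
    intro heq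
    obtain ⟨c, hc, hc0⟩ := exists_hasDerivAt_eq_zero hsu
      (X.cont.mono (Icc_subset_Icc hs.1.1.le hu.1.2)) heq
      fun t ht => X.hasDerivAt_xd (hIoo ht) (hgap t ht)
    exact X.xd_ne_zero hm_int hf_bound hv (Ioo_subset_Icc_self (hIoo hc)) (hgap c hc) hc0
  exact mul_neg_of_abs_eq_abs_of_ne (hs.2.trans hu.2.symm) hx

/-- for a billiard solution with initial speed larger than
`∫₀ᵀ m`, any two consecutive impact points lie on opposite endpoints of
`[-a, a]`, i.e. `x(tᵢ) * x(tᵢ₊₁) < 0`. -/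
theorem consecutive_impacts_opposite
    (T a : ℝ) (hT : 0 < T) (ha : 0 < a)
    (f : ℝ → ℝ → ℝ) (m : ℝ → ℝ)
    -- (H1): `f` is a Carathéodory function, integrably bounded by `m`
    (hf_meas : ∀ y : ℝ, Measurable fun t => f t y)
    (hf_cont : ∀ᵐ t ∂(volume : Measure ℝ), t ∈ Set.Icc 0 T → Continuous fun y => f t y)
    (hm_int : IntervalIntegrable m volume 0 T)
    (hm_nonneg : ∀ t ∈ Set.Icc 0 T, 0 ≤ m t)
    (hf_bound : ∀ t ∈ Set.Icc 0 T, ∀ y : ℝ, |f t y| ≤ m t)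
    (v : ℝ) (hv : (∫ s in (0:ℝ)..T, m s) < |v|)
    (X : BilliardSol T a f v) :
    ∀ s ∈ impactSet T a X.x, ∀ u ∈ impactSet T a X.x, s < u →
      (∀ τ ∈ Set.Ioo s u, τ ∉ impactSet T a X.x) →
      X.x s * X.x u < 0 :=
  consecutive_impacts_opposite_general T a f m hm_int hf_bound v hv X
end

section
/- Let x be a billiard solution of the one-dimensional impulsive Cauchy problem with initial velocity v. Then for every t ∈ [0,T] that is not an impact time one has |x'(t)| ≥ |v| − ∫₀ᵀ m(s) ds. In particular, if |v| > ∫₀ᵀ m(s) ds, then |x'(t)| ≥ d for the positive constant d := |v| − ∫₀ᵀ m(s) ds at every non-impact time t. -/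
open Set MeasureTheory Filter Topology

/-!
The quantity `|x'(t)| + ∫₀ᵗ m` never drops below `|v|`. On an impact-free interval
`x'' = f(t, x)` with `|f| ≤ m`, so `|x'|` loses at most `∫ m` there; at an impact the
reflection law only flips the sign of the velocity, so `|x'|` is continuous across it.
Induction on the number of impacts before `t` gives the bound.
-/

theorem nhdsWithin_sdiff_finite_of_notMem {X : Type*} [TopologicalSpace X] [T1Space X]
    {U E : Set X} {x : X} (hE : E.Finite) (hx : x ∉ U) : 𝓝[U \ E] x = 𝓝[U] x := by
  have hU : U \ E = U ∩ (E \ {x})ᶜ := by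
    ext y
    by_cases hy : y = x
    · subst hy; simp [hx]
    · simp [hy]
  have hnhds : (E \ {x})ᶜ ∈ 𝓝 x := hE.sdiff.isClosed.isOpen_compl.mem_nhds (by simp)
  rw [hU, nhdsWithin_inter_of_mem' (mem_nhdsWithin_of_mem_nhds hnhds)]

/-- The integrable-boundedness part of hypothesis (H1). -/
structure IntegrablyBoundedBy (T : ℝ) (f : ℝ → ℝ → ℝ) (m : ℝ → ℝ) : Prop where
  intervalIntegrable : IntervalIntegrable m volume 0 T
  abs_le : ∀ t ∈ Icc 0 T, ∀ y, |f t y| ≤ m t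

namespace IntegrablyBoundedBy

variable {T : ℝ} {f : ℝ → ℝ → ℝ} {m : ℝ → ℝ}

theorem nonneg (hm : IntegrablyBoundedBy T f m) {t : ℝ} (ht : t ∈ Icc 0 T) : 0 ≤ m t :=
  (abs_nonneg _).trans (hm.abs_le t ht 0)

theorem intervalIntegrable_of_mem (hm : IntegrablyBoundedBy T f m) {c d : ℝ}
    (hc : c ∈ Icc 0 T) (hd : d ∈ Icc 0 T) : IntervalIntegrable m volume c d :=
  hm.intervalIntegrable.mono_set (uIcc_subset_uIcc (Icc_subset_uIcc hc) (Icc_subset_uIcc hd))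

theorem integral_mono_interval (hm : IntegrablyBoundedBy T f m) {a b c d : ℝ}
    (h0c : 0 ≤ c) (hca : c ≤ a) (hab : a ≤ b) (hbd : b ≤ d) (hdT : d ≤ T) :
    ∫ t in a..b, m t ≤ ∫ t in c..d, m t := by
  have hcd : c ≤ d := hca.trans (hab.trans hbd)
  refine intervalIntegral.integral_mono_interval hca hab hbd
    (ae_restrict_of_forall_mem measurableSet_Ioc fun t ht => ?_)
    (hm.intervalIntegrable_of_mem ⟨h0c, hcd.trans hdT⟩ ⟨h0c.trans hcd, hdT⟩)
  exact hm.nonneg ⟨h0c.trans ht.1.le, ht.2.trans hdT⟩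

theorem abs_integral_le (hm : IntegrablyBoundedBy T f m) (g : ℝ → ℝ) {c d : ℝ}
    (hc : c ∈ Icc 0 T) (hd : d ∈ Icc 0 T) (hcd : c ≤ d) :
    |∫ t in c..d, f t (g t)| ≤ ∫ t in c..d, m t :=
  Real.norm_eq_abs _ ▸ intervalIntegral.norm_integral_le_of_norm_le hcd
    (Eventually.of_forall fun t ht => hm.abs_le t ⟨hc.1.trans ht.1.le, ht.2.trans hd.2⟩ _)
    (hm.intervalIntegrable_of_mem hc hd)

end IntegrablyBoundedBy

namespace BilliardSol

variable {T a v : ℝ} {f : ℝ → ℝ → ℝ} {m : ℝ → ℝ} (X : BilliardSol T a f v)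

theorem abs_xd_le_of_forall_notMem (hm : IntegrablyBoundedBy T f m) {s u : ℝ}
    (hs : s ∈ Icc 0 T) (hu : u ∈ Icc 0 T) (hsu : s ≤ u)
    (hfree : ∀ τ ∈ Icc s u, τ ∉ impactSet T a X.x) :
    |X.xd s| ≤ |X.xd u| + ∫ τ in s..u, m τ := by
  have hxd : X.xd s = X.xd u - ∫ τ in s..u, f τ (X.x τ) := by
    rw [X.accel s u hs hu hsu hfree]; ring
  calc |X.xd s| ≤ |X.xd u| + |∫ τ in s..u, f τ (X.x τ)| := hxd ▸ abs_sub _ _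
    _ ≤ |X.xd u| + ∫ τ in s..u, m τ := by gcongr; exact hm.abs_integral_le X.x hs hu hsu

theorem le_abs_leftLim (hm : IntegrablyBoundedBy T f m) {s L : ℝ}
    (hs : s ∈ impactSet T a X.x)
    (hL : Tendsto X.xd (𝓝[Iio s \ impactSet T a X.x] s) (𝓝 L))
    (hbefore : ∀ τ ∈ Ioo 0 s, τ ∉ impactSet T a X.x →
      |v| ≤ |X.xd τ| + ∫ u in (0:ℝ)..τ, m u) :
    |v| ≤ |L| + ∫ u in (0:ℝ)..s, m u := by
  have : (𝓝[Iio s \ impactSet T a X.x] s).NeBot := by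
    rw [nhdsWithin_sdiff_finite_of_notMem X.finImpacts self_notMem_Iio]; infer_instance
  refine ge_of_tendsto ((hL.abs).add_const _) ?_
  have hpos : ∀ᶠ τ in 𝓝[Iio s \ impactSet T a X.x] s, 0 < τ :=
    nhdsWithin_le_nhds (eventually_gt_nhds hs.1.1)
  filter_upwards [self_mem_nhdsWithin, hpos] with τ ⟨hτs, hτE⟩ hτ0
  have hτs : τ < s := hτs
  calc |v| ≤ |X.xd τ| + ∫ u in (0:ℝ)..τ, m u := hbefore τ ⟨hτ0, hτs⟩ hτE
    _ ≤ |X.xd τ| + ∫ u in (0:ℝ)..s, m u := by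
      gcongr; exact hm.integral_mono_interval le_rfl le_rfl hτ0.le hτs.le hs.1.2

theorem abs_leftLim_le (hm : IntegrablyBoundedBy T f m) {s t L : ℝ}
    (hs : s ∈ impactSet T a X.x) (hst : s < t) (ht : t ∈ Icc 0 T)
    (hafter : ∀ τ ∈ Ioc s t, τ ∉ impactSet T a X.x)
    (hL : Tendsto X.xd (𝓝[Iio s \ impactSet T a X.x] s) (𝓝 L)) :
    |L| ≤ |X.xd t| + ∫ u in s..t, m u := by
  have hR := X.reflect s hs (hst.trans_le ht.2) L hL
  have : (𝓝[Ioi s \ impactSet T a X.x] s).NeBot := by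
    rw [nhdsWithin_sdiff_finite_of_notMem X.finImpacts self_notMem_Ioi]; infer_instance
  refine le_of_tendsto (abs_neg L ▸ hR.abs) ?_
  have hlt : ∀ᶠ τ in 𝓝[Ioi s \ impactSet T a X.x] s, τ < t :=
    nhdsWithin_le_nhds (eventually_lt_nhds hst)
  filter_upwards [self_mem_nhdsWithin, hlt] with τ ⟨hsτ, _⟩ hτt
  have hsτ : s < τ := hsτ
  have hτ : τ ∈ Icc 0 T := ⟨hs.1.1.le.trans hsτ.le, hτt.le.trans ht.2⟩
  calc |X.xd τ| ≤ |X.xd t| + ∫ u in τ..t, m u :=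
        X.abs_xd_le_of_forall_notMem hm hτ ht hτt.le
          fun σ hσ => hafter σ ⟨hsτ.trans_le hσ.1, hσ.2⟩
    _ ≤ |X.xd t| + ∫ u in s..t, m u := by
      gcongr; exact hm.integral_mono_interval hs.1.1.le hsτ.le hτt.le le_rfl ht.2

theorem abs_initVel_le (hm : IntegrablyBoundedBy T f m) {t : ℝ} (ht : t ∈ Icc 0 T)
    (htE : t ∉ impactSet T a X.x) :
    |v| ≤ |X.xd t| + ∫ u in (0:ℝ)..t, m u := by
  set E := impactSet T a X.x
  induction hn : (E ∩ Iio t).ncard using Nat.strong_induction_on generalizing t with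
  | _ n ih =>
  have h0 : (0:ℝ) ∈ Icc 0 T := ⟨le_rfl, ht.1.trans ht.2⟩
  rcases (E ∩ Iio t).eq_empty_or_nonempty with hnone | hsome
  · have hfree : ∀ τ ∈ Icc 0 t, τ ∉ E := fun τ hτ hτE =>
      hτ.2.lt_or_eq.elim (fun h => hnone.subset ⟨hτE, h⟩) fun h => htE (h ▸ hτE)
    simpa only [X.initVel] using X.abs_xd_le_of_forall_notMem hm h0 ht ht.1 hfree
  obtain ⟨s, ⟨hsE, hst⟩, hlast⟩ :=
    exists_max_image _ id (X.finImpacts.inter_of_left _) hsome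
  obtain ⟨L, hL⟩ := X.leftLimExists s hsE
  have hbefore : ∀ τ ∈ Ioo 0 s, τ ∉ E → |v| ≤ |X.xd τ| + ∫ u in (0:ℝ)..τ, m u := by
    intro τ hτ hτE
    have hsub : E ∩ Iio τ ⊂ E ∩ Iio t :=
      LE.le.ssubset_of_mem_notMem
        (inter_subset_inter_right _ (Iio_subset_Iio (hτ.2.trans hst).le)) ⟨hsE, hst⟩
        fun h => lt_asymm h.2 hτ.2
    exact ih _ (hn ▸ ncard_lt_ncard hsub (X.finImpacts.inter_of_left _))
      ⟨hτ.1.le, hτ.2.le.trans hsE.1.2⟩ hτE rfl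
  have hafter : ∀ τ ∈ Ioc s t, τ ∉ E := fun τ hτ hτE =>
    hτ.2.lt_or_eq.elim (fun h => (hlast τ ⟨hτE, h⟩).not_gt hτ.1) fun h => htE (h ▸ hτE)
  have hsplit := intervalIntegral.integral_add_adjacent_intervals
    (hm.intervalIntegrable_of_mem h0 ⟨hsE.1.1.le, hsE.1.2⟩)
    (hm.intervalIntegrable_of_mem ⟨hsE.1.1.le, hsE.1.2⟩ ht)
  linarith [X.le_abs_leftLim hm hsE hL hbefore, X.abs_leftLim_le hm hsE hst ht hafter hL]

end BilliardSol

theorem velocity_lower_bound_general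
    (T a : ℝ)
    (f : ℝ → ℝ → ℝ) (m : ℝ → ℝ)
    -- (H1): `f` is a Carathéodory function, integrably bounded by `m`
    (hm_int : IntervalIntegrable m volume 0 T)
    (hf_bound : ∀ t ∈ Set.Icc 0 T, ∀ y : ℝ, |f t y| ≤ m t)
    (v : ℝ) (X : BilliardSol T a f v) :
    (∀ t ∈ Set.Icc 0 T \ impactSet T a X.x,
        |v| - (∫ s in (0:ℝ)..T, m s) ≤ |X.xd t|) ∧
      ((∫ s in (0:ℝ)..T, m s) < |v| →
        0 < |v| - (∫ s in (0:ℝ)..T, m s) ∧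
          ∀ t ∈ Set.Icc 0 T \ impactSet T a X.x,
            |v| - (∫ s in (0:ℝ)..T, m s) ≤ |X.xd t|) := by
  have hm : IntegrablyBoundedBy T f m := ⟨hm_int, hf_bound⟩
  have hbound : ∀ t ∈ Set.Icc 0 T \ impactSet T a X.x,
      |v| - (∫ s in (0:ℝ)..T, m s) ≤ |X.xd t| := by
    rintro t ⟨ht, htE⟩
    have := hm.integral_mono_interval le_rfl le_rfl ht.1 ht.2 le_rfl
    linarith [X.abs_initVel_le hm ht htE]
  exact ⟨hbound, fun hv => ⟨sub_pos.mpr hv, hbound⟩⟩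

/-- for a billiard solution with initial velocity `v`, at every
non-impact time `t ∈ [0, T]` the velocity satisfies `|x'(t)| ≥ |v| - ∫₀ᵀ m`;
in particular, if `|v| > ∫₀ᵀ m` then `|x'(t)| ≥ d := |v| - ∫₀ᵀ m > 0`. -/
theorem velocity_lower_bound
    (T a : ℝ) (hT : 0 < T) (ha : 0 < a)
    (f : ℝ → ℝ → ℝ) (m : ℝ → ℝ)
    -- (H1): `f` is a Carathéodory function, integrably bounded by `m`
    (hf_meas : ∀ y : ℝ, Measurable fun t => f t y)
    (hf_cont : ∀ᵐ t ∂(volume : Measure ℝ), t ∈ Set.Icc 0 T → Continuous fun y => f t y)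
    (hm_int : IntervalIntegrable m volume 0 T)
    (hm_nonneg : ∀ t ∈ Set.Icc 0 T, 0 ≤ m t)
    (hf_bound : ∀ t ∈ Set.Icc 0 T, ∀ y : ℝ, |f t y| ≤ m t)
    (v : ℝ) (X : BilliardSol T a f v) :
    (∀ t ∈ Set.Icc 0 T \ impactSet T a X.x,
        |v| - (∫ s in (0:ℝ)..T, m s) ≤ |X.xd t|) ∧
      ((∫ s in (0:ℝ)..T, m s) < |v| →
        0 < |v| - (∫ s in (0:ℝ)..T, m s) ∧
          ∀ t ∈ Set.Icc 0 T \ impactSet T a X.x,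
            |v| - (∫ s in (0:ℝ)..T, m s) ≤ |X.xd t|) :=
  velocity_lower_bound_general T a f m hm_int hf_bound v X
end

section
/- Let a > 0, d > 0 and s < u be real numbers, and let x : [s,u] → ℝ be continuous on [s,u] and differentiable on (s,u) with |x'(t)| ≥ d for all t ∈ (s,u). Suppose |x(t)| ≤ a for all t ∈ [s,u], |x(s)| = |x(u)| = a, and |x(t)| < a for all t ∈ (s,u). Then x(s)·x(u) < 0. -/
open Set

/-- if `x` is continuous on `[s, u]`, differentiable on `(s, u)` with
`|x'(t)| ≥ d > 0` there, `|x(t)| ≤ a` on `[s, u]`, `|x(s)| = |x(u)| = a` and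
`|x(t)| < a` on `(s, u)`, then `x(s) · x(u) < 0`: the two `barrier touches` occur
at opposite endpoints of `[-a, a]`. -/
theorem opposite_walls_between_consecutive_impacts
    (a d s u : ℝ) (ha : 0 < a) (hd : 0 < d) (hsu : s < u)
    (x x' : ℝ → ℝ)
    (hcont : ContinuousOn x (Set.Icc s u))
    (hderiv : ∀ t ∈ Set.Ioo s u, HasDerivAt x (x' t) t)
    (hd' : ∀ t ∈ Set.Ioo s u, d ≤ |x' t|)
    (hbound : ∀ t ∈ Set.Icc s u, |x t| ≤ a)
    (hs : |x s| = a) (hu : |x u| = a)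
    (hint : ∀ t ∈ Set.Ioo s u, |x t| < a) :
    x s * x u < 0 := by
  have hne : x s ≠ x u := by
    intro heq
    obtain ⟨c, hc, hc0⟩ := exists_hasDerivAt_eq_zero hsu hcont heq hderiv
    have := hd' c hc
    rw [hc0] at this
    simp at this
    linarith
  rcases abs_eq ha.le |>.mp hs with h1 | h1 <;>
  rcases abs_eq ha.le |>.mp hu with h2 | h2 <;>
    first
      | (exfalso; exact hne (h1.trans h2.symm))
      | (rw [h1, h2]; nlinarith)
end

section
/- Assume (H1) and (H2), let v ≠ 0, and let x_v be a billiard solution with initial velocity v having exactly k impact times. Then there exists c > 0 such that every billiard solution with initial velocity c·v has at least k + 2 impact times. -/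
open Set MeasureTheory Filter Topology

/-! Between impacts the velocity changes by at most `∫ m`, and an impact only flips its sign,
so `|x'(p)| ≤ |x'(q)| + ∫_p^q m` for all non-impact times `p ≤ q`. A solution launched with
speed `|w|` therefore never moves slower than `V = |w| - ∫₀ᵀ m`, and by the mean value theorem
each impact-free piece of `[0, T]` lasts at most `2a / V`. The `n` impacts cut `[0, T]` into
`n + 1` such pieces, so `V T ≤ (n + 1) 2a`, and a large speed `|c v|` forces `n ≥ k + 2`. -/

lemma nhdsWithin_sdiff_finite_neBot {X : Type*} [TopologicalSpace X] [T1Space X] {x : X}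
    {t S : Set X} [(𝓝[t] x).NeBot] (hx : x ∉ t) (hS : S.Finite) : (𝓝[t \ S] x).NeBot := by
  have hcompl : (S \ {x})ᶜ ∈ 𝓝[t] x :=
    mem_nhdsWithin_of_mem_nhds (hS.sdiff.isClosed.compl_mem_nhds (by simp))
  have heq : t \ S = t ∩ (S \ {x})ᶜ := by
    ext z
    by_cases hz : z = x <;> simp_all
  rwa [heq, nhdsWithin_inter_of_mem' hcompl]

lemma mul_sub_le_card_add_one_mul_of_gap {α : Type*} [CommRing α] [LinearOrder α] [IsOrderedRing α]
    (S : Finset α) {A B V D : α} (hAB : A ≤ B)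
    (hgap : ∀ p q, A ≤ p → p ≤ q → q ≤ B → (∀ τ ∈ Ioo p q, τ ∉ S) → V * (q - p) ≤ D) :
    V * (B - A) ≤ (S.card + 1) * D := by
  induction S using Finset.induction_on_max generalizing B with
  | empty => simpa using hgap A B le_rfl hAB le_rfl (by simp)
  | insert s S hlt ih =>
    have hsS : s ∉ S := fun h => (hlt s h).false
    rw [Finset.card_insert_of_notMem hsS, Nat.cast_succ]
    by_cases hs : s ∈ Ioo A B
    · have hlast : V * (B - s) ≤ D := hgap s B hs.1.le hs.2.le le_rfl fun τ hτ hτS => by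
        rcases Finset.mem_insert.1 hτS with rfl | h
        exacts [hτ.1.false, (hlt τ h).not_gt hτ.1]
      have hfirst : V * (s - A) ≤ (S.card + 1) * D := ih hs.1.le fun p q hp hpq hq hfree =>
        hgap p q hp hpq (hq.trans hs.2.le) fun τ hτ hτS => by
          rcases Finset.mem_insert.1 hτS with rfl | h
          exacts [hτ.2.not_ge hq, hfree τ hτ h]
      linear_combination hlast + hfirst
    · have hD : 0 ≤ D := by simpa using hgap A A le_rfl le_rfl hAB (by simp)
      have hall : V * (B - A) ≤ (S.card + 1) * D := ih hAB fun p q hp hpq hq hfree =>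
        hgap p q hp hpq hq fun τ hτ hτS => by
          rcases Finset.mem_insert.1 hτS with rfl | h
          exacts [hs ⟨hp.trans_lt hτ.1, hτ.2.trans_le hq⟩, hfree τ hτ h]
      linear_combination hall + hD

lemma mul_sub_le_abs_sub_of_le_abs_deriv {g g' : ℝ → ℝ} {p q V : ℝ} (hpq : p ≤ q)
    (hg : ContinuousOn g (Icc p q)) (hderiv : ∀ τ ∈ Ioo p q, HasDerivAt g (g' τ) τ)
    (hV : ∀ τ ∈ Ioo p q, V ≤ |g' τ|) : V * (q - p) ≤ |g q - g p| := by
  rcases hpq.eq_or_lt with rfl | hlt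
  · simp
  obtain ⟨c, hc, hslope⟩ := exists_hasDerivAt_eq_slope g g' hlt hg hderiv
  have hpos : 0 < q - p := sub_pos.2 hlt
  calc V * (q - p) ≤ |g' c| * (q - p) := by gcongr; exact hV c hc
    _ = |g q - g p| := by rw [hslope, abs_div, abs_of_pos hpos, div_mul_cancel₀ _ hpos.ne']

section IntervalIntegral

variable {m : ℝ → ℝ} {A B p q : ℝ}

lemma IntervalIntegrable.mono_set_of_le (hm : IntervalIntegrable m volume A B) (hAp : A ≤ p)
    (hpq : p ≤ q) (hqB : q ≤ B) : IntervalIntegrable m volume p q :=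
  hm.mono_set <| by
    rw [uIcc_of_le hpq, uIcc_of_le (hAp.trans (hpq.trans hqB))]
    exact Icc_subset_Icc hAp hqB

lemma integral_mono_interval_of_nonneg (hm : IntervalIntegrable m volume A B)
    (hm0 : ∀ t ∈ Icc A B, 0 ≤ m t) {p' q' : ℝ} (hAp : A ≤ p) (hpp' : p ≤ p') (hp'q' : p' ≤ q')
    (hq'q : q' ≤ q) (hqB : q ≤ B) : ∫ t in p'..q', m t ≤ ∫ t in p..q, m t :=
  intervalIntegral.integral_mono_interval hpp' hp'q' hq'q
    ((ae_restrict_mem measurableSet_Ioc).mono fun t ht => hm0 t ⟨hAp.trans ht.1.le, ht.2.trans hqB⟩)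
    (hm.mono_set_of_le hAp (hpp'.trans (hp'q'.trans hq'q)) hqB)

end IntervalIntegral

namespace BilliardSol

variable {T a : ℝ} {f : ℝ → ℝ → ℝ} {w : ℝ}

lemma halfWidth_nonneg (y : BilliardSol T a f w) (hT : 0 ≤ T) : 0 ≤ a := by
  simpa [y.init] using y.confined 0 ⟨le_rfl, hT⟩

variable (y : BilliardSol T a f w)

lemma abs_x_sub_le {p q : ℝ} (hp : p ∈ Icc 0 T) (hq : q ∈ Icc 0 T) : |y.x q - y.x p| ≤ 2 * a := by
  linarith [abs_sub (y.x q) (y.x p), y.confined p hp, y.confined q hq]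

lemma abs_xd_sub_le_s6 {m : ℝ → ℝ} (hm : IntervalIntegrable m volume 0 T)
    (hf_bound : ∀ t ∈ Icc 0 T, ∀ z, |f t z| ≤ m t) {s u : ℝ} (hs : 0 ≤ s) (hsu : s ≤ u)
    (hu : u ≤ T) (hfree : ∀ τ ∈ Icc s u, τ ∉ impactSet T a y.x) :
    |y.xd u - y.xd s| ≤ ∫ τ in s..u, m τ := by
  rw [y.accel s u ⟨hs, hsu.trans hu⟩ ⟨hs.trans hsu, hu⟩ hsu hfree, add_sub_cancel_left]
  exact intervalIntegral.norm_integral_le_of_norm_le hsu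
    (ae_of_all _ fun t ht => by
      rw [Real.norm_eq_abs]; exact hf_bound t ⟨hs.trans ht.1.le, ht.2.trans hu⟩ (y.x t))
    (hm.mono_set_of_le hs hsu hu)

lemma exists_tendsto_abs_xd {s : ℝ} (hs : s ∈ impactSet T a y.x) (hsT : s < T) :
    ∃ ℓ, Tendsto (fun t => |y.xd t|) (𝓝[Iio s \ impactSet T a y.x] s) (𝓝 ℓ) ∧
      Tendsto (fun t => |y.xd t|) (𝓝[Ioi s \ impactSet T a y.x] s) (𝓝 ℓ) := by
  obtain ⟨L, hL⟩ := y.leftLimExists s hs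
  exact ⟨|L|, hL.abs, by simpa using (y.reflect s hs hsT L hL).abs⟩

lemma le_of_abs_xd_bounds_around_impact {s p q β γ : ℝ} (hs : s ∈ impactSet T a y.x)
    (hsT : s < T) (hps : p < s) (hsq : s < q)
    (hbefore : ∀ t ∈ Ioo p s \ impactSet T a y.x, β ≤ |y.xd t|)
    (hafter : ∀ t ∈ Ioo s q \ impactSet T a y.x, |y.xd t| ≤ γ) : β ≤ γ := by
  obtain ⟨ℓ, hleft, hright⟩ := y.exists_tendsto_abs_xd hs hsT
  have := nhdsWithin_sdiff_finite_neBot (t := Iio s) (lt_irrefl s) y.finImpacts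
  have := nhdsWithin_sdiff_finite_neBot (t := Ioi s) (lt_irrefl s) y.finImpacts
  calc β ≤ ℓ := ge_of_tendsto hleft <| by
        filter_upwards [self_mem_nhdsWithin,
          eventually_nhdsWithin_of_eventually_nhds (eventually_gt_nhds hps)] with t ⟨hts, htS⟩ hpt
        exact hbefore t ⟨⟨hpt, hts⟩, htS⟩
    _ ≤ γ := le_of_tendsto hright <| by
        filter_upwards [self_mem_nhdsWithin,
          eventually_nhdsWithin_of_eventually_nhds (eventually_lt_nhds hsq)] with t ⟨hst, htS⟩ htq
        exact hafter t ⟨⟨hst, htq⟩, htS⟩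

theorem abs_xd_le_abs_xd_add_integral {m : ℝ → ℝ} (hm : IntervalIntegrable m volume 0 T)
    (hm0 : ∀ t ∈ Icc 0 T, 0 ≤ m t) (hf_bound : ∀ t ∈ Icc 0 T, ∀ z, |f t z| ≤ m t) {p q : ℝ}
    (hp : p ∈ Icc 0 T \ impactSet T a y.x) (hq : q ∈ Icc 0 T \ impactSet T a y.x) (hpq : p ≤ q) :
    |y.xd p| ≤ |y.xd q| + ∫ τ in p..q, m τ := by
  set S := impactSet T a y.x
  induction hn : (S ∩ Ioo p q).ncard using Nat.strong_induction_on generalizing p q with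
  | _ n ih =>
  obtain hempty | ⟨s, hsS, hspq⟩ := (S ∩ Ioo p q).eq_empty_or_nonempty
  · have hfree : ∀ τ ∈ Icc p q, τ ∉ S := fun τ hτ hτS => by
      rcases hτ.1.eq_or_lt with rfl | hpτ
      · exact hp.2 hτS
      rcases hτ.2.eq_or_lt with rfl | hτq
      · exact hq.2 hτS
      exact hempty.subset ⟨hτS, hpτ, hτq⟩
    have := y.abs_xd_sub_le_s6 hm hf_bound hp.1.1 hpq hq.1.2 hfree
    linarith [abs_sub_abs_le_abs_sub (y.xd p) (y.xd q), abs_sub_comm (y.xd p) (y.xd q)]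
  have hs0 : 0 ≤ s := hp.1.1.trans hspq.1.le
  have hsT : s ≤ T := hspq.2.le.trans hq.1.2
  have hcard : ∀ p' q', p ≤ p' → q' ≤ q → s ∉ Ioo p' q' → (S ∩ Ioo p' q').ncard < n := by
    intro p' q' hpp' hq'q hs
    rw [← hn]
    refine ncard_lt_ncard ((ssubset_iff_of_subset ?_).2 ⟨s, ⟨hsS, hspq⟩, fun h => hs h.2⟩)
      (y.finImpacts.subset inter_subset_left)
    exact inter_subset_inter_right _ (Ioo_subset_Ioo hpp' hq'q)
  have hbefore : ∀ t ∈ Ioo p s \ S, |y.xd p| - ∫ τ in p..s, m τ ≤ |y.xd t| := by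
    rintro t ⟨⟨hpt, hts⟩, htS⟩
    have ht : t ∈ Icc 0 T \ S := ⟨⟨hp.1.1.trans hpt.le, hts.le.trans hsT⟩, htS⟩
    have := ih _ (hcard p t le_rfl (hts.le.trans hspq.2.le) fun h => h.2.not_gt hts) hpt.le hp ht rfl
    have := integral_mono_interval_of_nonneg hm hm0 hp.1.1 le_rfl hpt.le hts.le hsT
    linarith
  have hafter : ∀ t ∈ Ioo s q \ S, |y.xd t| ≤ |y.xd q| + ∫ τ in s..q, m τ := by
    rintro t ⟨⟨hst, htq⟩, htS⟩
    have ht : t ∈ Icc 0 T \ S := ⟨⟨hs0.trans hst.le, htq.le.trans hq.1.2⟩, htS⟩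
    have := ih _ (hcard t q (hspq.1.le.trans hst.le) le_rfl fun h => h.1.not_gt hst) htq.le ht hq rfl
    have := integral_mono_interval_of_nonneg hm hm0 hs0 hst.le htq.le le_rfl hq.1.2
    linarith
  have := y.le_of_abs_xd_bounds_around_impact hsS (hspq.2.trans_le hq.1.2) hspq.1 hspq.2
    hbefore hafter
  rw [← intervalIntegral.integral_add_adjacent_intervals
    (hm.mono_set_of_le hp.1.1 hspq.1.le hsT) (hm.mono_set_of_le hs0 hspq.2.le hq.1.2)]
  linarith

lemma sub_integral_le_abs_xd {m : ℝ → ℝ} (hm : IntervalIntegrable m volume 0 T)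
    (hm0 : ∀ t ∈ Icc 0 T, 0 ≤ m t) (hf_bound : ∀ t ∈ Icc 0 T, ∀ z, |f t z| ≤ m t) {t : ℝ}
    (ht : t ∈ Icc 0 T \ impactSet T a y.x) : |w| - ∫ τ in 0..T, m τ ≤ |y.xd t| := by
  have h0 : 0 ∈ Icc 0 T \ impactSet T a y.x :=
    ⟨⟨le_rfl, ht.1.1.trans ht.1.2⟩, fun h => h.1.1.false⟩
  have := y.abs_xd_le_abs_xd_add_integral hm hm0 hf_bound h0 ht ht.1.1
  have := integral_mono_interval_of_nonneg hm hm0 le_rfl le_rfl ht.1.1 ht.1.2 le_rfl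
  rw [y.initVel] at *
  linarith

lemma sub_integral_mul_sub_le_two_mul {m : ℝ → ℝ} (hm : IntervalIntegrable m volume 0 T)
    (hm0 : ∀ t ∈ Icc 0 T, 0 ≤ m t) (hf_bound : ∀ t ∈ Icc 0 T, ∀ z, |f t z| ≤ m t) {p q : ℝ}
    (hp : 0 ≤ p) (hpq : p ≤ q) (hq : q ≤ T) (hfree : ∀ τ ∈ Ioo p q, τ ∉ impactSet T a y.x) :
    (|w| - ∫ τ in 0..T, m τ) * (q - p) ≤ 2 * a := by
  have hIcc (τ : ℝ) (hτ : τ ∈ Ioo p q) : τ ∈ Icc 0 T \ impactSet T a y.x :=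
    ⟨⟨hp.trans hτ.1.le, hτ.2.le.trans hq⟩, hfree τ hτ⟩
  calc (|w| - ∫ τ in 0..T, m τ) * (q - p) ≤ |y.x q - y.x p| :=
        mul_sub_le_abs_sub_of_le_abs_deriv hpq (y.cont.mono (Icc_subset_Icc hp hq))
          (fun τ hτ => (y.hasDeriv τ (hIcc τ hτ)).hasDerivAt
            (Icc_mem_nhds (hp.trans_lt hτ.1) (hτ.2.trans_le hq)))
          (fun τ hτ => y.sub_integral_le_abs_xd hm hm0 hf_bound (hIcc τ hτ))
    _ ≤ 2 * a := y.abs_x_sub_le ⟨hp, hpq.trans hq⟩ ⟨hp.trans hpq, hq⟩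

theorem sub_integral_mul_le_ncard_add_one_mul {m : ℝ → ℝ} (hT : 0 ≤ T) (hm : IntervalIntegrable m volume 0 T)
    (hm0 : ∀ t ∈ Icc 0 T, 0 ≤ m t) (hf_bound : ∀ t ∈ Icc 0 T, ∀ z, |f t z| ≤ m t) :
    (|w| - ∫ τ in 0..T, m τ) * T ≤ ((impactSet T a y.x).ncard + 1) * (2 * a) := by
  simpa [ncard_eq_toFinset_card _ y.finImpacts] using
    mul_sub_le_card_add_one_mul_of_gap y.finImpacts.toFinset hT fun p q hp hpq hq hfree =>
      y.sub_integral_mul_sub_le_two_mul hm hm0 hf_bound hp hpq hq fun τ hτ => by simpa using hfree τ hτ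

theorem lt_ncard_impactSet {m : ℝ → ℝ} (hT : 0 ≤ T) (hm : IntervalIntegrable m volume 0 T)
    (hm0 : ∀ t ∈ Icc 0 T, 0 ≤ m t) (hf_bound : ∀ t ∈ Icc 0 T, ∀ z, |f t z| ≤ m t) {n : ℕ}
    (hfast : (n + 1) * (2 * a) < (|w| - ∫ τ in 0..T, m τ) * T) :
    n < (impactSet T a y.x).ncard := by
  have hbound := y.sub_integral_mul_le_ncard_add_one_mul hT hm hm0 hf_bound
  have ha := y.halfWidth_nonneg hT
  exact_mod_cast lt_of_add_lt_add_right
    (lt_of_mul_lt_mul_right (hfast.trans_le hbound) (by positivity))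

end BilliardSol

theorem impacts_increase_with_speed_general
    (T a : ℝ) (hT : 0 < T)
    (f : ℝ → ℝ → ℝ) (m : ℝ → ℝ)
    -- (H1): `f` is a Carathéodory function, integrably bounded by `m`
    (hm_int : IntervalIntegrable m volume 0 T)
    (hm_nonneg : ∀ t ∈ Set.Icc 0 T, 0 ≤ m t)
    (hf_bound : ∀ t ∈ Set.Icc 0 T, ∀ y : ℝ, |f t y| ≤ m t)
    (v : ℝ) (hv : v ≠ 0)
    (k : ℕ) :
    ∃ c > (0:ℝ), ∀ xcv : BilliardSol T a f (c * v),
      k + 2 ≤ (impactSet T a xcv.x).ncard := by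
  set M := ∫ τ in (0:ℝ)..T, m τ
  have hM : 0 ≤ M := intervalIntegral.integral_nonneg hT.le hm_nonneg
  -- `|a|`, as `0 ≤ a` is only known once a solution exists
  set W := M + (2 * |a| * (k + 2) + 1) / T
  have hW : 0 < W := by positivity
  have hv' : 0 < |v| := abs_pos.2 hv
  refine ⟨W / |v|, div_pos hW hv', fun y => ?_⟩
  have hspeed : |W / |v| * v| = W := by
    rw [abs_mul, abs_div, abs_abs, div_mul_cancel₀ _ hv'.ne', abs_of_pos hW]
  have hWT : (W - M) * T = 2 * |a| * (k + 2) + 1 := by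
    simp only [W, add_sub_cancel_left]
    field_simp
  refine y.lt_ncard_impactSet (n := k + 1) hT.le hm_int hm_nonneg hf_bound ?_
  rw [hspeed, hWT]
  push_cast
  nlinarith [le_abs_self a]

/-- if a billiard solution with initial velocity `v ≠ 0` has exactly
`k` impact times, then there is `c > 0` such that every billiard solution with
initial velocity `c · v` has at least `k + 2` impact times. -/
theorem impacts_increase_with_speed
    (T a : ℝ) (hT : 0 < T) (ha : 0 < a)
    (f : ℝ → ℝ → ℝ) (m : ℝ → ℝ)
    -- (H1): `f` is a Carathéodory function, integrably bounded by `m`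
    (hf_meas : ∀ y : ℝ, Measurable fun t => f t y)
    (hf_cont : ∀ᵐ t ∂(volume : Measure ℝ), t ∈ Set.Icc 0 T → Continuous fun y => f t y)
    (hm_int : IntervalIntegrable m volume 0 T)
    (hm_nonneg : ∀ t ∈ Set.Icc 0 T, 0 ≤ m t)
    (hf_bound : ∀ t ∈ Set.Icc 0 T, ∀ y : ℝ, |f t y| ≤ m t)
    -- (H2): `f` is Lipschitz in the second variable with integrable constant
    (hf_lip : ∃ α : ℝ → ℝ, IntervalIntegrable α volume 0 T ∧
      ∀ᵐ t ∂(volume : Measure ℝ), t ∈ Set.Icc 0 T → ∀ y z : ℝ, |f t y - f t z| ≤ α t * |y - z|)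
    (v : ℝ) (hv : v ≠ 0)
    (xv : BilliardSol T a f v) (k : ℕ)
    (hk : (impactSet T a xv.x).ncard = k) :
    ∃ c > (0:ℝ), ∀ xcv : BilliardSol T a f (c * v),
      k + 2 ≤ (impactSet T a xcv.x).ncard :=
  impacts_increase_with_speed_general T a hT f m hm_int hm_nonneg hf_bound v hv k
end

section
/- Let n ≥ 3 be odd (so that the sphere S^{n−1} is even-dimensional and the hairy ball theorem applies; the paper writes n = 2k, which is an apparent misprint). Let φ : ℝⁿ → ℝ be continuously differentiable, let K = {x ∈ ℝⁿ : φ(x) ≤ 0} be compact with frontier K = {x : φ(x) = 0} and gradient ∇φ(y) ≠ 0 for every y with φ(y) = 0. Assume 0 lies in the interior of K and that K is strongly star-shaped with respect to 0, i.e. t·x belongs to the interior of K for every x ∈ K and every t ∈ [0,1). Then there exist a point z with φ(z) = 0 and a real number λ > 0 such that ∇φ(z) = λ·z; that is, there is a boundary point whose outer normal direction is parallel to the ray from 0 through z. -/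
/-!
Take a point `z` of the compact set `K = {φ ≤ 0}` of maximal norm; `z ≠ 0` because `K` is a
neighbourhood of `0`. The ray beyond `z` leaves `K` immediately, so `φ` is positive there; by
continuity `φ z = 0`, and the one-sided derivative of `φ` along the ray gives `0 ≤ ⟪∇φ z, z⟫`.
Since `z` also maximizes `‖·‖²` on the level set `{φ = 0}`, Lagrange multipliers make `∇φ z` a
multiple of `z`, and the sign inequality together with `∇φ z ≠ 0` makes the multiple positive.
-/

open Filter Topology
open scoped RealInnerProductSpace

section NormedSpace

variable {E : Type*} [NormedAddCommGroup E] [NormedSpace ℝ E] {φ : E → ℝ} {z : E}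

lemma ne_zero_of_isMaxOn_norm [Nontrivial E] {K : Set E} (h0 : (0 : E) ∈ interior K)
    (hmax : IsMaxOn norm K z) : z ≠ 0 := by
  rintro rfl
  have hK : K ⊆ {0} := fun x hx => norm_le_zero_iff.1 (by simpa using hmax hx)
  simpa using interior_mono hK h0

lemma norm_lt_norm_add_smul_self (hz : z ≠ 0) {t : ℝ} (ht : 0 < t) : ‖z‖ < ‖z + t • z‖ := by
  have hzt : z + t • z = (1 + t) • z := by rw [add_smul, one_smul]
  rw [hzt, norm_smul, Real.norm_of_nonneg (by positivity)]
  nlinarith [norm_pos_iff.2 hz]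

lemma eventually_pos_add_smul_self_of_isMaxOn_norm (hmax : IsMaxOn norm {x | φ x ≤ 0} z)
    (hz : z ≠ 0) : ∀ᶠ t in 𝓝[>] (0 : ℝ), 0 < φ (z + t • z) := by
  filter_upwards [self_mem_nhdsWithin] with t ht
  by_contra! hle
  exact (hmax hle).not_gt (norm_lt_norm_add_smul_self hz ht)

lemma apply_eq_zero_of_isMaxOn_norm (hφ : Continuous φ) (hmax : IsMaxOn norm {x | φ x ≤ 0} z)
    (hz : z ≠ 0) (hzK : φ z ≤ 0) : φ z = 0 := by
  have hlim : Tendsto (fun t : ℝ => φ (z + t • z)) (𝓝[>] 0) (𝓝 (φ z)) := by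
    have hcont : Continuous fun t : ℝ => φ (z + t • z) := by fun_prop
    simpa using (hcont.tendsto 0).mono_left nhdsWithin_le_nhds
  exact le_antisymm hzK <| ge_of_tendsto hlim <|
    (eventually_pos_add_smul_self_of_isMaxOn_norm hmax hz).mono fun _ => le_of_lt

end NormedSpace

section InnerProductSpace

variable {E : Type*} [NormedAddCommGroup E] [InnerProductSpace ℝ E] {φ : E → ℝ} {z : E}

lemma pos_of_eq_smul_of_inner_nonneg {g : E} {c : ℝ} (hg : g ≠ 0) (h : g = c • z)
    (hinner : 0 ≤ ⟪g, z⟫) : 0 < c := by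
  subst h
  have hc : c ≠ 0 := by rintro rfl; simp at hg
  have hz : z ≠ 0 := by rintro rfl; simp at hg
  rw [real_inner_smul_left, real_inner_self_eq_norm_sq] at hinner
  exact lt_of_le_of_ne (nonneg_of_mul_nonneg_left hinner (by positivity)) hc.symm

variable [CompleteSpace E]

lemma gradient_norm_sq (x : E) : gradient (fun x : E => ‖x‖ ^ 2) x = (2 : ℝ) • x := by
  apply (InnerProductSpace.toDual ℝ E).injective
  ext y
  simp [toDual_gradient]

lemma IsLocalExtrOn.exists_gradient_eq_smul_gradient {f : E → ℝ} {x₀ : E}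
    (hextr : IsLocalExtrOn φ {x | f x = f x₀} x₀) (hf : ContDiffAt ℝ 1 f x₀)
    (hφ : ContDiffAt ℝ 1 φ x₀) (hφ₀ : gradient φ x₀ ≠ 0) :
    ∃ c : ℝ, gradient f x₀ = c • gradient φ x₀ := by
  obtain ⟨a, b, hab, h⟩ := hextr.exists_multipliers_of_hasStrictFDerivAt_1d
    (hf.hasStrictFDerivAt one_ne_zero) (hφ.hasStrictFDerivAt one_ne_zero)
  have hgrad : a • gradient f x₀ + b • gradient φ x₀ = 0 := by
    apply (InnerProductSpace.toDual ℝ E).injective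
    simpa [toDual_gradient] using h
  have ha : a ≠ 0 := by
    rintro rfl
    have hb : b ≠ 0 := by simpa using hab
    exact hφ₀ (by simpa [hb] using hgrad)
  refine ⟨-b / a, ?_⟩
  linear_combination (norm := skip) a⁻¹ • hgrad
  match_scalars <;> field_simp <;> ring

lemma exists_gradient_eq_smul_of_isMaxOn_norm (hφ : ContDiffAt ℝ 1 φ z)
    (hmax : IsMaxOn norm {x | φ x ≤ 0} z) (hz : z ≠ 0) (hzK : φ z ≤ 0) :
    ∃ c : ℝ, gradient φ z = c • z := by
  have hmax_sq : IsMaxOn (fun x : E => ‖x‖ ^ 2) {x | φ x = φ z} z := fun x hx => by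
    have hx : ‖x‖ ≤ ‖z‖ := hmax (show φ x ≤ 0 from hx.symm ▸ hzK)
    exact pow_le_pow_left₀ (norm_nonneg x) hx 2
  have hgrad_sq : gradient (fun x : E => ‖x‖ ^ 2) z ≠ 0 := by
    simpa [gradient_norm_sq] using hz
  obtain ⟨c, hc⟩ := IsLocalExtrOn.exists_gradient_eq_smul_gradient hmax_sq.localize.isExtr hφ
    (contDiff_norm_sq ℝ).contDiffAt hgrad_sq
  exact ⟨c * 2, by rw [hc, gradient_norm_sq, smul_smul]⟩

lemma inner_gradient_self_nonneg_of_isMaxOn_norm (hφ : DifferentiableAt ℝ φ z)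
    (hmax : IsMaxOn norm {x | φ x ≤ 0} z) (hz : z ≠ 0) (hzK : φ z ≤ 0) :
    0 ≤ ⟪gradient φ z, z⟫ := by
  have hmin : IsMinOn φ {x | 0 < φ x} z := fun x hx => hzK.trans (le_of_lt hx)
  have hcone : z ∈ posTangentConeAt {x | 0 < φ x} z :=
    mem_posTangentConeAt_of_frequently_mem
      (eventually_pos_add_smul_self_of_isMaxOn_norm hmax hz).frequently
  rw [inner_gradient_left]
  exact hmin.localize.hasFDerivWithinAt_nonneg hφ.hasFDerivAt.hasFDerivWithinAt hcone

end InnerProductSpace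

theorem exists_normal_ray_general
    (n : ℕ) (hn : 3 ≤ n)
    (φ : EuclideanSpace ℝ (Fin n) → ℝ) (hφ : ContDiff ℝ 1 φ)
    (hcpt : IsCompact {x : EuclideanSpace ℝ (Fin n) | φ x ≤ 0})
    (hgrad : ∀ y : EuclideanSpace ℝ (Fin n), φ y = 0 → gradient φ y ≠ 0)
    (h0 : (0 : EuclideanSpace ℝ (Fin n)) ∈ interior {x : EuclideanSpace ℝ (Fin n) | φ x ≤ 0}) :
    ∃ (z : EuclideanSpace ℝ (Fin n)) (lam : ℝ), φ z = 0 ∧ 0 < lam ∧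
      gradient φ z = lam • z := by
  have : NeZero n := ⟨by omega⟩
  obtain ⟨z, hzK, hmax⟩ :=
    hcpt.exists_isMaxOn ⟨0, interior_subset h0⟩ continuous_norm.continuousOn
  have hz : z ≠ 0 := ne_zero_of_isMaxOn_norm h0 hmax
  have hφz : φ z = 0 := apply_eq_zero_of_isMaxOn_norm hφ.continuous hmax hz hzK
  obtain ⟨c, hc⟩ := exists_gradient_eq_smul_of_isMaxOn_norm hφ.contDiffAt hmax hz hzK
  have hinner := inner_gradient_self_nonneg_of_isMaxOn_norm
    (hφ.differentiable one_ne_zero z) hmax hz hzK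
  exact ⟨z, c, hφz, pos_of_eq_smul_of_inner_nonneg (hgrad z hφz) hc hinner, hc⟩

/-- for `n ≥ 3` odd and `K = {φ ≤ 0}` a compact set with smooth
boundary `{φ = 0}` (with non-vanishing gradient there), containing `0` in its
interior and strongly star-shaped with respect to `0`, there is a boundary point
`z` whose outer normal direction `∇φ(z)` is a positive multiple of `z`. -/
theorem exists_normal_ray
    (n : ℕ) (hodd : Odd n) (hn : 3 ≤ n)
    (φ : EuclideanSpace ℝ (Fin n) → ℝ) (hφ : ContDiff ℝ 1 φ)
    (hcpt : IsCompact {x : EuclideanSpace ℝ (Fin n) | φ x ≤ 0})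
    (hfr : frontier {x : EuclideanSpace ℝ (Fin n) | φ x ≤ 0}
      = {x : EuclideanSpace ℝ (Fin n) | φ x = 0})
    (hgrad : ∀ y : EuclideanSpace ℝ (Fin n), φ y = 0 → gradient φ y ≠ 0)
    (h0 : (0 : EuclideanSpace ℝ (Fin n)) ∈ interior {x : EuclideanSpace ℝ (Fin n) | φ x ≤ 0})
    (hstar : ∀ x ∈ {x : EuclideanSpace ℝ (Fin n) | φ x ≤ 0}, ∀ t ∈ Set.Ico (0:ℝ) 1,
      t • x ∈ interior {x : EuclideanSpace ℝ (Fin n) | φ x ≤ 0}) :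
    ∃ (z : EuclideanSpace ℝ (Fin n)) (lam : ℝ), φ z = 0 ∧ 0 < lam ∧
      gradient φ z = lam • z :=
  exists_normal_ray_general n hn φ hφ hcpt hgrad h0
end

section
/- Let K ⊂ ℝⁿ be compact with 0 in its interior, T > 0, and m ∈ L¹([0,T]) nonnegative. Then for every ε > 0 there exists d > 0 with the following property: for every v ∈ ℝⁿ with ‖v‖ ≥ d and every function x : [0,T] → ℝⁿ with x(0) = 0, x'(0) = v, x' absolutely continuous, and ‖x''(t)‖ ≤ m(t) for a.e. t ∈ [0,T], there exists t₁ ∈ (0,T] such that x(t₁) does not lie in the interior of K, x(t) lies in the interior of K for all t ∈ [0, t₁), and ‖x(t) − t·v‖ < ε for all t ∈ [0, t₁]. In other words, up to the first time the trajectory reaches the boundary, the motion is uniformly close to the free uniform motion t ↦ t·v. -/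
open Set MeasureTheory

/-- for a compact set `K ⊂ ℝⁿ` with `0` in its interior, and any
trajectory `x` with `x(0) = 0`, `x'(0) = v` whose velocity `x'` is absolutely
continuous with `‖x''(t)‖ ≤ m(t)` a.e. (encoded by the integral bound
`‖x'(t) - x'(s)‖ ≤ ∫ₛᵗ m`), if `‖v‖` is large enough then the trajectory reaches
the complement of the interior of `K` at some first time `t₁ ∈ (0, T]` and stays
`ε`-close to the uniform motion `t ↦ t • v` up to that time. -/
theorem close_to_uniform_motion_up_to_first_impact
    (n : ℕ) (T : ℝ) (hT : 0 < T)
    (K : Set (EuclideanSpace ℝ (Fin n))) (hK : IsCompact K)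
    (h0 : (0 : EuclideanSpace ℝ (Fin n)) ∈ interior K)
    (m : ℝ → ℝ) (hm_int : IntervalIntegrable m volume 0 T)
    (hm_nonneg : ∀ t ∈ Set.Icc 0 T, 0 ≤ m t) :
    ∀ ε > (0:ℝ), ∃ d > (0:ℝ), ∀ v : EuclideanSpace ℝ (Fin n), d ≤ ‖v‖ →
      ∀ x xd : ℝ → EuclideanSpace ℝ (Fin n),
        x 0 = 0 → xd 0 = v →
        (∀ t ∈ Set.Icc 0 T, HasDerivWithinAt x (xd t) (Set.Icc 0 T) t) →
        (∀ s t : ℝ, s ∈ Set.Icc 0 T → t ∈ Set.Icc 0 T → s ≤ t →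
          ‖xd t - xd s‖ ≤ ∫ u in s..t, m u) →
        ∃ t₁ ∈ Set.Ioc 0 T, x t₁ ∉ interior K ∧
          (∀ t ∈ Set.Ico 0 t₁, x t ∈ interior K) ∧
          ∀ t ∈ Set.Icc 0 t₁, ‖x t - t • v‖ < ε := by
  intro ε hε
  -- a ball containing K
  obtain ⟨r, hr⟩ := hK.isBounded.subset_closedBall 0
  set R : ℝ := max r 0 with hRdef
  have hKR : K ⊆ Metric.closedBall 0 R :=
    hr.trans (Metric.closedBall_subset_closedBall (le_max_left _ _))
  have hR0 : (0:ℝ) ≤ R := le_max_right _ _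
  -- total mass
  set M : ℝ := ∫ u in (0:ℝ)..T, m u with hMdef
  have hM0 : 0 ≤ M :=
    intervalIntegral.integral_nonneg hT.le (fun u hu => hm_nonneg u hu)
  have hm_ae : 0 ≤ᵐ[volume.restrict (Ioc (0:ℝ) T)] m :=
    (ae_restrict_iff' measurableSet_Ioc).2
      (Filter.Eventually.of_forall fun u hu => hm_nonneg u ⟨hu.1.le, hu.2⟩)
  set d : ℝ := max ((R + 1 + M * T) / T) (((R + M * T) * M + 1) / ε) with hddef
  have hd0 : 0 < d := lt_max_of_lt_left (div_pos (by positivity) hT)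
  refine ⟨d, hd0, ?_⟩
  intro v hv x xd hx0 hxd0 hx hlip
  have hv0 : 0 < ‖v‖ := lt_of_lt_of_le hd0 hv
  -- velocity stays within M of v
  have hbd : ∀ t ∈ Icc (0:ℝ) T, ‖xd t - v‖ ≤ M := by
    intro t ht
    have h1 := hlip 0 t ⟨le_refl 0, hT.le⟩ ht ht.1
    rw [hxd0] at h1
    refine h1.trans ?_
    exact intervalIntegral.integral_mono_interval le_rfl ht.1 ht.2 hm_ae hm_int
  -- key estimate ‖x t - t • v‖ ≤ M * t
  have key : ∀ t ∈ Icc (0:ℝ) T, ‖x t - t • v‖ ≤ M * t := by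
    have h := norm_image_sub_le_of_norm_deriv_le_segment'
      (f := fun t => x t - t • v) (f' := fun t => xd t - v) (a := 0) (b := T) (C := M)
      (fun t ht => ((hx t ht).sub (((hasDerivWithinAt_id t _).smul_const v).congr_deriv
        (one_smul ℝ v))))
      (fun t ht => hbd t (Ico_subset_Icc_self ht))
    intro t ht
    have := h t ht
    simpa [hx0] using this
  have hcont : ContinuousOn x (Icc 0 T) := fun t ht => (hx t ht).continuousWithinAt
  -- the exit set
  set S : Set ℝ := Icc 0 T ∩ x ⁻¹' (interior K)ᶜ with hSdef
  have hSclosed : IsClosed S :=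
    hcont.preimage_isClosed_of_isClosed isClosed_Icc isOpen_interior.isClosed_compl
  -- nonemptiness witness
  set ts : ℝ := (R + 1 + M * T) / ‖v‖ with htsdef
  have hts0 : 0 < ts := div_pos (by positivity) hv0
  have htsT : ts ≤ T := by
    have h1 : (R + 1 + M * T) / T ≤ ‖v‖ := (le_max_left _ _).trans hv
    rw [div_le_iff₀ hT] at h1
    rw [htsdef, div_le_iff₀ hv0]
    nlinarith
  have htsIcc : ts ∈ Icc (0:ℝ) T := ⟨hts0.le, htsT⟩
  have hts_far : x ts ∉ interior K := by
    intro hmem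
    have h1 : ‖x ts‖ ≤ R := by
      have := hKR (interior_subset hmem)
      simpa [Metric.mem_closedBall, dist_eq_norm] using this
    have h2 : ‖x ts - ts • v‖ ≤ M * ts := key ts htsIcc
    have h3 : ‖ts • v‖ ≤ ‖x ts‖ + ‖x ts - ts • v‖ := by
      have := norm_sub_le (x ts) (x ts - ts • v)
      simpa using this
    have h4 : ‖ts • v‖ = ts * ‖v‖ := by
      rw [norm_smul, Real.norm_of_nonneg hts0.le]
    have h5 : ts * ‖v‖ = R + 1 + M * T := div_mul_cancel₀ _ hv0.ne'
    have h6 : M * ts ≤ M * T := mul_le_mul_of_nonneg_left htsT hM0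
    linarith [h3, h4 ▸ h3]
  have hSne : S.Nonempty := ⟨ts, htsIcc, hts_far⟩
  have hSbdd : BddBelow S := ⟨0, fun t ht => ht.1.1⟩
  set t₁ : ℝ := sInf S with ht₁def
  have ht₁S : t₁ ∈ S := hSclosed.csInf_mem hSne hSbdd
  have ht₁T : t₁ ≤ T := ht₁S.1.2
  have ht₁0 : 0 < t₁ := by
    rcases lt_or_eq_of_le ht₁S.1.1 with h | h
    · exact h
    · exfalso; apply ht₁S.2; rw [← h, hx0]; exact h0
  have hbefore : ∀ t ∈ Ico 0 t₁, x t ∈ interior K := by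
    intro t ht
    by_contra hc
    have : t ∈ S := ⟨⟨ht.1, ht.2.le.trans ht₁T⟩, hc⟩
    exact absurd (csInf_le hSbdd this) (not_le.2 ht.2)
  -- bound on t₁
  have ht₁bound : t₁ ≤ (R + M * T) / ‖v‖ := by
    by_contra hc
    push_neg at hc
    obtain ⟨t, htl, htu⟩ := exists_between hc
    have ht0 : 0 ≤ t := le_trans (by positivity) htl.le
    have htT : t ≤ T := htu.le.trans ht₁T
    have hmem := hbefore t ⟨ht0, htu⟩
    have h1 : ‖x t‖ ≤ R := by
      have := hKR (interior_subset hmem)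
      simpa [Metric.mem_closedBall, dist_eq_norm] using this
    have h2 : ‖x t - t • v‖ ≤ M * t := key t ⟨ht0, htT⟩
    have h3 : ‖t • v‖ ≤ ‖x t‖ + ‖x t - t • v‖ := by
      have := norm_sub_le (x t) (x t - t • v)
      simpa using this
    have h4 : ‖t • v‖ = t * ‖v‖ := by
      rw [norm_smul, Real.norm_of_nonneg ht0]
    have h5 : R + M * T < t * ‖v‖ := by
      have := (div_lt_iff₀ hv0).1 htl
      linarith
    have h6 : M * t ≤ M * T := mul_le_mul_of_nonneg_left htT hM0
    linarith [h4 ▸ h3]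
  refine ⟨t₁, ⟨ht₁0, ht₁T⟩, ht₁S.2, hbefore, ?_⟩
  intro t ht
  have htT : t ≤ T := ht.2.trans ht₁T
  have h2 : ‖x t - t • v‖ ≤ M * t := key t ⟨ht.1, htT⟩
  have h3 : M * t ≤ M * t₁ := mul_le_mul_of_nonneg_left ht.2 hM0
  have h4 : M * t₁ ≤ M * ((R + M * T) / ‖v‖) := mul_le_mul_of_nonneg_left ht₁bound hM0
  have h5 : M * ((R + M * T) / ‖v‖) ≤ M * ((R + M * T) / d) := by
    apply mul_le_mul_of_nonneg_left _ hM0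
    apply div_le_div_of_nonneg_left (by positivity) hd0 hv
  have h6 : M * ((R + M * T) / d) < ε := by
    have h7 : ((R + M * T) * M + 1) / ε ≤ d := le_max_right _ _
    rw [div_le_iff₀ hε] at h7
    rw [mul_div_assoc'] at *
    rw [div_lt_iff₀ hd0]
    nlinarith
  linarith
end
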